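/- (B-quartet Inference Rule) Let N+ be a rooted binary phylogenetic network on n taxa, n ≥ 5, and suppose {a,b,c,d} and {b,c,d,e} are B-quartets on N+. If, on its induced 4-taxon network, any one of the sets {a,b,c,e}, {a,b,d,e}, {a,c,d,e} is either (a) a T-quartet whose associated resolved quartet (the quartet displayed on the reduced unrooted tree of blobs of the induced 4-taxon network) separates a and e, or (b) a B-quartet, then all three of {a,b,c,e}, {a,b,d,e}, {a,c,d,e} are B-quartets on N+. -/

import Mathlib

/-!
# Common framework

Finite directed multigraphs, undirected connectivity, numbers of connected
components, cut edges, subgraphs, blobs, blobs determined by leaf sets,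
B-quartets, and quartets displayed via cut-edge separation.

A *network* is modelled as a finite directed multigraph (edge directions are
simply ignored for the undirected notions of connectivity, cut edges and
blobs).
-/

/-- A finite directed multigraph: finite types of nodes and of edges, with
source and target maps. -/
structure MDigraph where
  V : Type
  E : Type
  finV : Finite V
  finE : Finite E
  src : E → V
  tgt : E → V

attribute [instance] MDigraph.finV MDigraph.finE

namespace MDigraph

section Basic

variable (G : MDigraph)

/-- One undirected step between `u` and `v` along an edge from the set `F`. -/
def Step (F : Set G.E) (u v : G.V) : Prop :=
  ∃ e ∈ F, (G.src e = u ∧ G.tgt e = v) ∨ (G.src e = v ∧ G.tgt e = u)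

/-- Undirected reachability (an undirected path) using only edges in `F`. -/
def Conn (F : Set G.E) (u v : G.V) : Prop :=
  Relation.ReflTransGen (G.Step F) u v

/-- One directed step from `u` to `v` along an edge from the set `F`. -/
def DStep (F : Set G.E) (u v : G.V) : Prop :=
  ∃ e ∈ F, G.src e = u ∧ G.tgt e = v

/-- Directed reachability (a directed path) using only edges in `F`. -/
def DConn (F : Set G.E) (u v : G.V) : Prop :=
  Relation.ReflTransGen (G.DStep F) u v

/-- `u` is above (ancestral to) `v`: there is a directed path from `u` to `v`. -/
def Above (u v : G.V) : Prop := G.DConn Set.univ u v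

/-- In-degree of a node. -/
noncomputable def inDeg (v : G.V) : ℕ := Nat.card {e : G.E // G.tgt e = v}

/-- Out-degree of a node. -/
noncomputable def outDeg (v : G.V) : ℕ := Nat.card {e : G.E // G.src e = v}

/-- Undirected degree of a node (a loop counts twice). -/
noncomputable def degree (v : G.V) : ℕ := G.inDeg v + G.outDeg v

/-- The number of connected components of the graph with node set `W` and edge
set the restriction to `W` of `F` (two nodes of `W` lie in the same connected
component iff they are joined by an undirected path). -/
noncomputable def numComponents (W : Set G.V) (F : Set G.E) : ℕ :=
  Nat.card (Quot (fun u v : W => G.Step {e ∈ F | G.src e ∈ W ∧ G.tgt e ∈ W} u.1 v.1))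

/-- `v` lies on every directed path from `u` to `w`: there is no directed path
from `u` to `w` all of whose nodes avoid `v`. -/
def OnEveryPath (v u w : G.V) : Prop :=
  ¬ (u ≠ v ∧ w ≠ v ∧
      Relation.ReflTransGen (fun a b => G.DStep Set.univ a b ∧ a ≠ v ∧ b ≠ v) u w)

end Basic

/-- A subgraph (subnetwork): a set of nodes together with a set of edges
joining them. -/
structure Subgraph (G : MDigraph) where
  verts : Set G.V
  edges : Set G.E
  src_mem : ∀ e ∈ edges, G.src e ∈ verts
  tgt_mem : ∀ e ∈ edges, G.tgt e ∈ verts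

/-- The whole graph, as a subgraph of itself. -/
def top (G : MDigraph) : Subgraph G :=
  ⟨Set.univ, Set.univ, fun _ _ => Set.mem_univ _, fun _ _ => Set.mem_univ _⟩

namespace Subgraph

variable {G : MDigraph}

/-- Containment of subgraphs. -/
def le (H K : Subgraph G) : Prop := H.verts ⊆ K.verts ∧ H.edges ⊆ K.edges

/-- The subgraph `H` is connected. -/
def IsConnected (H : Subgraph G) : Prop :=
  H.verts.Nonempty ∧ ∀ u ∈ H.verts, ∀ v ∈ H.verts, G.Conn H.edges u v

/-- Delete an edge from a subgraph. -/
def deleteEdge (H : Subgraph G) (e : G.E) : Subgraph G :=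
  ⟨H.verts, H.edges \ {e}, fun e' he' => H.src_mem e' he'.1,
    fun e' he' => H.tgt_mem e' he'.1⟩

/-- The number of connected components of a subgraph. -/
noncomputable def numComponents (H : Subgraph G) : ℕ :=
  G.numComponents H.verts H.edges

/-- `e` is a cut edge of the (sub)graph `H`: deleting it increases the number
of connected components. -/
def IsCutEdge (H : Subgraph G) (e : G.E) : Prop :=
  e ∈ H.edges ∧ H.numComponents < (H.deleteEdge e).numComponents

end Subgraph

variable {G : MDigraph}

/-- `B` is a blob of the network `H`: a maximal connected subnetwork of `H`
having no cut edges.  (A blob is *trivial* if it consists of a single node.) -/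
def IsBlobIn (H B : Subgraph G) : Prop :=
  B.le H ∧ B.IsConnected ∧ (∀ e, ¬ B.IsCutEdge e) ∧
    ∀ B' : Subgraph G, B'.le H → B'.IsConnected → (∀ e, ¬ B'.IsCutEdge e) →
      B.le B' → B'.le B

/-- `e` is a cut edge of the network `H` incident to the blob `B`: exactly one
of its endpoints is a node of `B`. -/
def IncidentCut (H B : Subgraph G) (e : G.E) : Prop :=
  H.IsCutEdge e ∧ Xor' (G.src e ∈ B.verts) (G.tgt e ∈ B.verts)

/-- The blob `B` of the network `H` is determined by the set `S` of leaf
labels: deletion of the cut edges of `H` incident to `B` leaves the nodes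
labelled by the elements of `S` in distinct connected components. -/
def DeterminesIn {X : Type} (H B : Subgraph G) (leaf : X → G.V) (S : Set X) : Prop :=
  ∀ s ∈ S, ∀ t ∈ S, s ≠ t →
    ¬ G.Conn {e ∈ H.edges | ¬ IncidentCut H B e} (leaf s) (leaf t)

/-- Four taxa form a B-quartet on the network `H`: some blob of `H` is
determined by them. -/
def BQuartetIn {X : Type} (H : Subgraph G) (leaf : X → G.V) (a b c d : X) : Prop :=
  ∃ B : Subgraph G, IsBlobIn H B ∧ DeterminesIn H B leaf ({a, b, c, d} : Set X)

/-- Some cut edge of `H` separates the taxa `p, q` from the taxa `r, s`: after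
its deletion `p, q` lie in one connected component and `r, s` in another.  For
a 4-taxon set `{p,q,r,s}` this says exactly that the (reduced unrooted) tree of
blobs of `H` displays the resolved quartet `pq|rs` (the edges of the tree of
blobs correspond exactly to the cut edges of the network, and suppressing
degree-2 nodes or contracting blobs does not affect which taxa a cut edge
separates). -/
def CutSep {X : Type} (H : Subgraph G) (leaf : X → G.V) (p q r s : X) : Prop :=
  ∃ e, H.IsCutEdge e ∧
    G.Conn (H.edges \ {e}) (leaf p) (leaf q) ∧
    G.Conn (H.edges \ {e}) (leaf r) (leaf s) ∧
    ¬ G.Conn (H.edges \ {e}) (leaf p) (leaf r)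

end MDigraph
open MDigraph in
/-- A rooted binary phylogenetic network on the taxon set `X`: a connected
directed acyclic graph whose node set consists of a root (in-degree 0,
out-degree 2), leaves (in-degree 1, out-degree 0) bijectively labelled by `X`,
tree nodes (in-degree 1, out-degree 2) and hybrid nodes (in-degree 2,
out-degree 1). -/
structure PhyloNetwork (X : Type) extends MDigraph where
  root : toMDigraph.V
  leaf : X → toMDigraph.V
  leaf_inj : Function.Injective leaf
  root_in : toMDigraph.inDeg root = 0
  root_out : toMDigraph.outDeg root = 2
  leaf_in : ∀ x, toMDigraph.inDeg (leaf x) = 1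
  leaf_out : ∀ x, toMDigraph.outDeg (leaf x) = 0
  internal : ∀ v, v ≠ root → (∀ x, v ≠ leaf x) →
      (toMDigraph.inDeg v = 1 ∧ toMDigraph.outDeg v = 2) ∨
      (toMDigraph.inDeg v = 2 ∧ toMDigraph.outDeg v = 1)
  acyclic : ∀ v, ¬ Relation.TransGen (toMDigraph.DStep Set.univ) v v
  conn : ∀ u v, toMDigraph.Conn Set.univ u v

namespace PhyloNetwork

open MDigraph

variable {X : Type} (N : PhyloNetwork X)

/-- The subnetwork of `N⁺` consisting of all nodes and edges ancestral to at
least one taxon in `Y`.  Since suppressing nodes of in- and out-degree 1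
affects neither blobs, nor cut edges, nor which sets of taxa they separate,
this subnetwork faithfully represents the induced network `N⁺_Y`. -/
def inducedSub (Y : Set X) : Subgraph N.toMDigraph where
  verts := {v | ∃ y ∈ Y, N.toMDigraph.Above v (N.leaf y)}
  edges := {e | ∃ y ∈ Y, N.toMDigraph.Above (N.toMDigraph.tgt e) (N.leaf y)}
  src_mem := by
    rintro e ⟨y, hy, h⟩
    exact ⟨y, hy, Relation.ReflTransGen.head ⟨e, Set.mem_univ e, rfl, rfl⟩ h⟩
  tgt_mem := by
    rintro e ⟨y, hy, h⟩
    exact ⟨y, hy, h⟩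

/-- `v` is a stable ancestor of the leaves: it is ancestral to every leaf and
lies on every directed path from the root to any leaf. -/
def IsStableAncestor (v : N.toMDigraph.V) : Prop :=
  (∀ x, N.toMDigraph.Above v (N.leaf x)) ∧
  ∀ x, N.toMDigraph.OnEveryPath v N.root (N.leaf x)

/-- `v` is the lowest stable ancestor (LSA) of the network: a stable ancestor
below all stable ancestors. -/
def IsLSA (v : N.toMDigraph.V) : Prop :=
  N.IsStableAncestor v ∧ ∀ u, N.IsStableAncestor u → N.toMDigraph.Above u v

/-- The number of cut edges of `N⁺` incident to the blob `B`. -/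
noncomputable def blobDeg (B : Subgraph N.toMDigraph) : ℕ :=
  Nat.card {e : N.toMDigraph.E // IncidentCut (top N.toMDigraph) B e}

/-- `B` is an `m`-blob of the rooted network `N⁺`: if the root is not in `B`
then `B` has exactly `m` incident cut edges, while if the root is in `B` then
`B` has exactly `m - 1` incident cut edges. -/
def IsMBlob (B : Subgraph N.toMDigraph) (m : ℕ) : Prop :=
  IsBlobIn (top N.toMDigraph) B ∧
    ((N.root ∈ B.verts ∧ m = N.blobDeg B + 1) ∨ (N.root ∉ B.verts ∧ m = N.blobDeg B))

end PhyloNetwork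

open MDigraph

/-- On the induced 4-taxon network on `{p,q,r,s}` (represented by the
subnetwork of nodes and edges ancestral to one of these four taxa), the set
`{p,q,r,s}` is a T-quartet whose associated resolved quartet — the quartet
displayed on the reduced unrooted tree of blobs of the induced 4-taxon
network — separates `p` and `s` (i.e. the quartet is `pq|rs` or `pr|qs`). -/
def TSepInduced {X : Type} (N : PhyloNetwork X) (p q r s : X) : Prop :=
  ¬ BQuartetIn (N.inducedSub {p, q, r, s}) N.leaf p q r s ∧
    (CutSep (N.inducedSub {p, q, r, s}) N.leaf p q r s ∨
     CutSep (N.inducedSub {p, q, r, s}) N.leaf p r q s)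

/-- The hypothesis of the B-quartet inference rule for the 4-taxon set
`{p,q,r,s}`: on its induced 4-taxon network the set is either a T-quartet
whose associated resolved quartet separates `p` and `s`, or a B-quartet. -/
def RuleHyp {X : Type} (N : PhyloNetwork X) (p q r s : X) : Prop :=
  TSepInduced N p q r s ∨
    BQuartetIn (N.inducedSub {p, q, r, s}) N.leaf p q r s


/-!
Let `B` be a blob determined by `{a, b, c, d}`. A blob determined by three taxa is unique (two
such blobs sharing a node merge into a larger one, and disjoint ones cannot both separate three
taxa), so `B` is also determined by `{b, c, d, e}`, and it remains to separate `a` from `e` at `B`.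
Otherwise the component `K` of `a` left by deleting the cut edges at `B` contains `e` but none of
`b, c, d`, and is attached to `B` by a single cut edge, as two would close a cycle through `B`.
In the induced network on `{a, x, y, e}` with `x, y ∈ {b, c, d}` this edge separates `{a, e}`
from `{x, y}`, so that quartet is displayed as `ae|xy` and no blob separates all four taxa,
against the hypothesis.
-/

namespace MDigraph

section Defs

variable (G : MDigraph)

def Crosses (K : Set G.V) (e : G.E) : Prop := Xor (G.src e ∈ K) (G.tgt e ∈ K)

def edgesIn (F : Set G.E) (K : Set G.V) : Set G.E := {e ∈ F | G.src e ∈ K ∧ G.tgt e ∈ K}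

def componentOf (F : Set G.E) (x : G.V) : Set G.V := {v | G.Conn F x v}

end Defs

variable {G : MDigraph}

def nonIncidentEdges (H B : Subgraph G) : Set G.E := {e ∈ H.edges | ¬ IncidentCut H B e}

section Conn

variable {F F' : Set G.E} {K : Set G.V} {u v w : G.V}

lemma Step.symm (h : G.Step F u v) : G.Step F v u := by
  obtain ⟨e, he, h | h⟩ := h
  exacts [⟨e, he, Or.inr h⟩, ⟨e, he, Or.inl h⟩]

instance : Std.Symm (G.Step F) := ⟨fun _ _ => Step.symm⟩

lemma Conn.rfl : G.Conn F u u := Relation.ReflTransGen.refl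

lemma Conn.symm (h : G.Conn F u v) : G.Conn F v u :=
  Std.Symm.symm (r := Relation.ReflTransGen (G.Step F)) _ _ h

lemma Conn.trans (h : G.Conn F u v) (h' : G.Conn F v w) : G.Conn F u w :=
  Relation.ReflTransGen.trans h h'

lemma Conn.mono (hF : F ⊆ F') (h : G.Conn F u v) : G.Conn F' u v :=
  Relation.ReflTransGen.mono (fun _ _ ⟨e, he, h⟩ => ⟨e, hF he, h⟩) _ _ h

lemma conn_of_mem {e : G.E} (he : e ∈ F) : G.Conn F (G.src e) (G.tgt e) :=
  .single ⟨e, he, Or.inl ⟨rfl, rfl⟩⟩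

lemma mem_componentOf : v ∈ G.componentOf F u ↔ G.Conn F u v := Iff.rfl

lemma DConn.toConn (h : G.DConn F u v) : G.Conn F u v :=
  Relation.ReflTransGen.mono (fun _ _ ⟨e, he, hs, ht⟩ => ⟨e, he, Or.inl ⟨hs, ht⟩⟩) _ _ h

lemma crosses_compl {e : G.E} : G.Crosses Kᶜ e ↔ G.Crosses K e := xor_not_not

lemma Conn.exists_crosses (h : G.Conn F u v) (hu : u ∈ K) (hv : v ∉ K) :
    ∃ e ∈ F, G.Crosses K e := by
  induction h with
  | refl => exact absurd hu hv
  | @tail b c _ hbc ih =>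
    by_cases hb : b ∈ K
    · obtain ⟨e, he, ⟨hs, ht⟩ | ⟨hs, ht⟩⟩ := hbc
      · exact ⟨e, he, Or.inl ⟨hs ▸ hb, ht ▸ hv⟩⟩
      · exact ⟨e, he, Or.inr ⟨ht ▸ hb, hs ▸ hv⟩⟩
    · exact ih hb

lemma Conn.mem_of_not_crosses (h : G.Conn F u v) (hF : ∀ e ∈ F, ¬ G.Crosses K e) (hu : u ∈ K) :
    v ∈ K :=
  by_contra fun hv => let ⟨e, he, hc⟩ := h.exists_crosses hu hv; hF e he hc

lemma Conn.edgesIn_of_not_crosses (h : G.Conn F u v) (hF : ∀ e ∈ F, ¬ G.Crosses K e) (hu : u ∈ K) :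
    G.Conn (G.edgesIn F K) u v := by
  induction h with
  | refl => exact Conn.rfl
  | @tail b c hub hbc ih =>
    have hb : b ∈ K := Conn.mem_of_not_crosses hub hF hu
    obtain ⟨e, he, hends⟩ := hbc
    have hcross := hF e he
    have hK : G.src e ∈ K ∧ G.tgt e ∈ K := by
      unfold Crosses Xor at hcross
      rcases hends with ⟨rfl, rfl⟩ | ⟨rfl, rfl⟩ <;> tauto
    exact ih.tail ⟨e, ⟨he, hK⟩, hends⟩

lemma Conn.decomp (g : G.E) (h : G.Conn F u v) :
    G.Conn (F \ {g}) u v ∨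
      (G.Conn (F \ {g}) u (G.src g) ∧ G.Conn (F \ {g}) (G.tgt g) v) ∨
      (G.Conn (F \ {g}) u (G.tgt g) ∧ G.Conn (F \ {g}) (G.src g) v) := by
  induction h with
  | refl => exact Or.inl Conn.rfl
  | @tail b c _ hbc ih =>
    obtain ⟨e, he, hends⟩ := hbc
    by_cases heg : e = g
    · subst heg
      rcases hends with ⟨rfl, rfl⟩ | ⟨rfl, rfl⟩
      · rcases ih with h | ⟨h, -⟩ | ⟨h, -⟩
        exacts [Or.inr (Or.inl ⟨h, Conn.rfl⟩), Or.inr (Or.inl ⟨h, Conn.rfl⟩), Or.inl h]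
      · rcases ih with h | ⟨h, -⟩ | ⟨h, -⟩
        exacts [Or.inr (Or.inr ⟨h, Conn.rfl⟩), Or.inl h, Or.inr (Or.inr ⟨h, Conn.rfl⟩)]
    · have hstep : G.Step (F \ {g}) b c := ⟨e, ⟨he, heg⟩, hends⟩
      rcases ih with h | ⟨h₁, h₂⟩ | ⟨h₁, h₂⟩
      exacts [Or.inl (h.tail hstep), Or.inr (Or.inl ⟨h₁, h₂.tail hstep⟩),
        Or.inr (Or.inr ⟨h₁, h₂.tail hstep⟩)]

lemma Conn.diff_of_conn_diff {g : G.E} (hg : G.Conn (F \ {g}) (G.src g) (G.tgt g))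
    (h : G.Conn F u v) : G.Conn (F \ {g}) u v := by
  rcases h.decomp g with h | ⟨h₁, h₂⟩ | ⟨h₁, h₂⟩
  exacts [h, h₁.trans (hg.trans h₂), h₁.trans (hg.symm.trans h₂)]

/-- A walk that leaves `K` through the only crossing edge must come back through it. -/
lemma Conn.edgesIn_of_subsingleton (h : G.Conn F u v)
    (hK : {e ∈ F | G.Crosses K e}.Subsingleton) (hu : u ∈ K) (hv : v ∈ K) :
    G.Conn (G.edgesIn F K) u v := by
  by_cases hf : ∃ f ∈ F, G.Crosses K f
  · obtain ⟨f, hfF, hfK⟩ := hf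
    have hF : ∀ e ∈ F \ {f}, ¬ G.Crosses K e := fun e he hc => he.2 (hK ⟨he.1, hc⟩ ⟨hfF, hfK⟩)
    have hsub : G.edgesIn (F \ {f}) K ⊆ G.edgesIn F K := fun e he => ⟨he.1.1, he.2⟩
    unfold Crosses Xor at hfK
    rcases h.decomp f with h | ⟨h₁, h₂⟩ | ⟨h₁, h₂⟩
    · exact (h.edgesIn_of_not_crosses hF hu).mono hsub
    all_goals
      have := h₁.mem_of_not_crosses hF hu
      have := h₂.symm.mem_of_not_crosses hF hv
      tauto
  · exact h.edgesIn_of_not_crosses (fun e he hc => hf ⟨e, he, hc⟩) hu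

end Conn

namespace Subgraph

variable {H H₁ H₂ : Subgraph G} {e : G.E} {u v w : G.V}

lemma quot_mk_eq_iff {x y : H.verts} :
    Quot.mk (fun u v : H.verts => G.Step (G.edgesIn H.edges H.verts) u.1 v.1) x = Quot.mk _ y ↔
      G.Conn H.edges x y := by
  have : Std.Symm (fun u v : H.verts => G.Step (G.edgesIn H.edges H.verts) u.1 v.1) :=
    ⟨fun _ _ => Step.symm⟩
  rw [Quot.eq, Relation.EqvGen.eqvGen_eq_reflTransGen]
  constructor
  · intro h
    exact Conn.mono (fun e he => he.1)
      (Relation.ReflTransGen.lift Subtype.val (fun _ _ h => h) _ _ h)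
  · obtain ⟨w, hw⟩ := y
    intro h
    change G.Conn H.edges x w at h
    induction h with
    | refl => exact .refl
    | @tail b c _ hbc ih =>
      obtain ⟨f, hf, hends⟩ := hbc
      have hb : b ∈ H.verts := by
        rcases hends with ⟨rfl, -⟩ | ⟨-, rfl⟩
        exacts [H.src_mem f hf, H.tgt_mem f hf]
      exact (ih hb).tail ⟨f, ⟨hf, H.src_mem f hf, H.tgt_mem f hf⟩, hends⟩

lemma numComponents_le_one_iff :
    H.numComponents ≤ 1 ↔ ∀ u ∈ H.verts, ∀ v ∈ H.verts, G.Conn H.edges u v := by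
  rw [Subgraph.numComponents, MDigraph.numComponents, Finite.card_le_one_iff_subsingleton]
  constructor
  · intro hs u hu v hv
    exact quot_mk_eq_iff.1 (hs.elim (Quot.mk _ ⟨u, hu⟩) (Quot.mk _ ⟨v, hv⟩))
  · refine fun h => ⟨?_⟩
    rintro ⟨u⟩ ⟨v⟩
    exact quot_mk_eq_iff.2 (h u u.2 v v.2)

lemma numComponents_pos (h : H.verts.Nonempty) : 0 < H.numComponents := by
  obtain ⟨v, hv⟩ := h
  exact Nat.card_pos_iff.2 ⟨⟨Quot.mk _ ⟨v, hv⟩⟩, inferInstance⟩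

lemma numComponents_deleteEdge_le (h : G.Conn (H.edges \ {e}) (G.src e) (G.tgt e)) :
    (H.deleteEdge e).numComponents ≤ H.numComponents := by
  refine Nat.card_le_card_of_surjective (Quot.lift (Quot.mk _) fun u v huv => ?_) ?_
  · obtain ⟨f, hf, hends⟩ := huv
    exact quot_mk_eq_iff (H := H.deleteEdge e) |>.2
      (Conn.diff_of_conn_diff h (.single ⟨f, hf.1, hends⟩))
  · rintro ⟨v⟩
    exact ⟨Quot.mk _ v, rfl⟩

lemma not_conn_of_isCutEdge (h : H.IsCutEdge e) :
    ¬ G.Conn (H.edges \ {e}) (G.src e) (G.tgt e) :=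
  fun hc => (numComponents_deleteEdge_le hc).not_gt h.2

lemma IsConnected.conn_diff (hH : H.IsConnected) (he : ¬ H.IsCutEdge e) (hu : u ∈ H.verts)
    (hv : v ∈ H.verts) : G.Conn (H.edges \ {e}) u v := by
  by_cases heH : e ∈ H.edges
  · have hle : (H.deleteEdge e).numComponents ≤ 1 :=
      (not_lt.1 fun hlt => he ⟨heH, hlt⟩).trans (numComponents_le_one_iff.2 hH.2)
    exact numComponents_le_one_iff.1 hle u hu v hv
  · rw [Set.sdiff_singleton_eq_self heH]
    exact hH.2 u hu v hv

lemma not_isCutEdge_of_conn_diff (hne : H.verts.Nonempty)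
    (h : ∀ u ∈ H.verts, ∀ v ∈ H.verts, G.Conn (H.edges \ {e}) u v) : ¬ H.IsCutEdge e :=
  fun hcut => by
    have h₁ := (numComponents_le_one_iff (H := H.deleteEdge e)).2 h
    have h₂ := numComponents_pos hne
    have h₃ := hcut.2
    omega

def IsTwoEdgeConnected (H : Subgraph G) : Prop :=
  H.IsConnected ∧ ∀ f, ∀ u ∈ H.verts, ∀ v ∈ H.verts, G.Conn (H.edges \ {f}) u v

lemma isTwoEdgeConnected_iff : H.IsTwoEdgeConnected ↔ H.IsConnected ∧ ∀ f, ¬ H.IsCutEdge f :=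
  ⟨fun h => ⟨h.1, fun _ => not_isCutEdge_of_conn_diff h.1.1 (h.2 _)⟩,
    fun h => ⟨h.1, fun f _ hu _ hv => h.1.conn_diff (h.2 f) hu hv⟩⟩

def union (H₁ H₂ : Subgraph G) : Subgraph G where
  verts := H₁.verts ∪ H₂.verts
  edges := H₁.edges ∪ H₂.edges
  src_mem := by rintro e (h | h); exacts [Or.inl (H₁.src_mem e h), Or.inr (H₂.src_mem e h)]
  tgt_mem := by rintro e (h | h); exacts [Or.inl (H₁.tgt_mem e h), Or.inr (H₂.tgt_mem e h)]

lemma IsTwoEdgeConnected.union (h₁ : H₁.IsTwoEdgeConnected) (h₂ : H₂.IsTwoEdgeConnected)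
    (hw₁ : w ∈ H₁.verts) (hw₂ : w ∈ H₂.verts) : (H₁.union H₂).IsTwoEdgeConnected := by
  refine ⟨⟨⟨w, Or.inl hw₁⟩, ?_⟩, fun f => ?_⟩
  · have hw : ∀ u ∈ (H₁.union H₂).verts, G.Conn (H₁.union H₂).edges u w := by
      rintro u (hu | hu)
      exacts [(h₁.1.2 u hu w hw₁).mono Set.subset_union_left,
        (h₂.1.2 u hu w hw₂).mono Set.subset_union_right]
    exact fun u hu v hv => (hw u hu).trans (hw v hv).symm
  · have hw : ∀ u ∈ (H₁.union H₂).verts, G.Conn ((H₁.union H₂).edges \ {f}) u w := by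
      rintro u (hu | hu)
      exacts [(h₁.2 f u hu w hw₁).mono (Set.sdiff_subset_sdiff_left Set.subset_union_left),
        (h₂.2 f u hu w hw₂).mono (Set.sdiff_subset_sdiff_left Set.subset_union_right)]
    exact fun u hu v hv => (hw u hu).trans (hw v hv).symm

end Subgraph

open Subgraph

section MinimalConn

variable {F : Set G.E} {u v w : G.V} {e f : G.E}

lemma conn_src_of_minimal (hF : Minimal (fun F => G.Conn F u v) F) (he : e ∈ F) :
    G.Conn F u (G.src e) := by
  by_contra hs
  have hdiff : G.Conn (F \ {e}) u v := by
    rcases hF.prop.decomp e with h | ⟨h, -⟩ | ⟨h, -⟩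
    · exact h
    · exact absurd (h.mono Set.sdiff_subset) hs
    · exact absurd ((h.mono Set.sdiff_subset).trans (conn_of_mem he).symm) hs
  exact (hF.2 hdiff Set.sdiff_subset he).2 rfl

lemma conn_diff_of_minimal (hF : Minimal (fun F => G.Conn F u v) F) (hf : f ∈ F)
    (hw : G.Conn F u w) : G.Conn (F \ {f}) w u ∨ G.Conn (F \ {f}) w v := by
  have huv : ¬ G.Conn (F \ {f}) u v := fun h => (hF.2 h Set.sdiff_subset hf).2 rfl
  rcases hw.decomp f with h | ⟨h₁, h₂⟩ | ⟨h₁, h₂⟩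
  · exact Or.inl h.symm
  · rcases hF.prop.decomp f with h | ⟨-, h⟩ | ⟨-, h⟩
    exacts [absurd h huv, Or.inr (h₂.symm.trans h), absurd (h₁.trans h) huv]
  · rcases hF.prop.decomp f with h | ⟨-, h⟩ | ⟨-, h⟩
    exacts [absurd h huv, absurd (h₁.trans h) huv, Or.inr (h₂.symm.trans h)]

/-- The witness is a minimal set of edges connecting the ends of `e`, closed up by `e`. -/
lemma exists_isTwoEdgeConnected_of_conn_diff (h : G.Conn (Set.univ \ {e}) (G.src e) (G.tgt e)) :
    ∃ C : Subgraph G, C.IsTwoEdgeConnected ∧ G.src e ∈ C.verts ∧ G.tgt e ∈ C.verts := by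
  obtain ⟨F, hFe, hF⟩ :=
    exists_minimal_le_of_wellFoundedLT (fun F => G.Conn F (G.src e) (G.tgt e)) _ h
  have heF : e ∉ F := fun he => (hFe he).2 rfl
  have hends : ∀ f ∈ insert e F,
      G.src f ∈ G.componentOf F (G.src e) ∧ G.tgt f ∈ G.componentOf F (G.src e) := by
    rintro f (rfl | hf)
    · exact ⟨Conn.rfl, hF.prop⟩
    · have hs := conn_src_of_minimal hF hf
      exact ⟨hs, hs.trans (conn_of_mem hf)⟩
  let C : Subgraph G :=
    ⟨G.componentOf F (G.src e), insert e F, fun f hf => (hends f hf).1, fun f hf => (hends f hf).2⟩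
  have hFC : ∀ f ∉ F, F ⊆ C.edges \ {f} := fun f hf g hg =>
    ⟨Or.inr hg, fun hgf : g = f => hf (hgf ▸ hg)⟩
  have hends' : ∀ f, G.Conn (C.edges \ {f}) (G.src e) (G.tgt e) := by
    intro f
    by_cases hfe : f = e
    · exact hF.prop.mono (hFC f (hfe ▸ heF))
    · exact conn_of_mem ⟨Or.inl rfl, fun hef : e = f => hfe hef.symm⟩
  have hhub : ∀ f, ∀ x ∈ C.verts, G.Conn (C.edges \ {f}) x (G.src e) := by
    intro f x hx
    by_cases hf : f ∈ F
    · have hsub : F \ {f} ⊆ C.edges \ {f} := Set.sdiff_subset_sdiff_left (Set.subset_insert e F)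
      rcases conn_diff_of_minimal hF hf hx with h | h
      exacts [h.mono hsub, (h.mono hsub).trans (hends' f).symm]
    · exact (mem_componentOf.1 hx).symm.mono (hFC f hf)
  refine ⟨C, ⟨⟨⟨_, Conn.rfl⟩, fun x hx y hy => ?_⟩, fun f x hx y hy => ?_⟩, Conn.rfl, hF.prop⟩
  · exact ((mem_componentOf.1 hx).symm.trans hy).mono (Set.subset_insert e F)
  · exact (hhub f x hx).trans (hhub f y hy).symm

end MinimalConn

section Blob

variable {H B B₁ B₂ U : Subgraph G} {K : Set G.V} {x w : G.V} {e : G.E}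

lemma IsBlobIn.isConnected (hB : IsBlobIn H B) : B.IsConnected := hB.2.1

lemma IsBlobIn.isTwoEdgeConnected (hB : IsBlobIn H B) : B.IsTwoEdgeConnected :=
  isTwoEdgeConnected_iff.2 ⟨hB.isConnected, hB.2.2.1⟩

lemma IsBlobIn.le_of_isTwoEdgeConnected (hB : IsBlobIn (top G) B) (hU : U.IsTwoEdgeConnected)
    (hle : B.le U) : U.le B :=
  let ⟨hc, hnc⟩ := isTwoEdgeConnected_iff.1 hU
  hB.2.2.2 U ⟨Set.subset_univ _, Set.subset_univ _⟩ hc hnc hle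

lemma IsBlobIn.verts_eq_of_mem (hB₁ : IsBlobIn (top G) B₁) (hB₂ : IsBlobIn (top G) B₂)
    (hw₁ : w ∈ B₁.verts) (hw₂ : w ∈ B₂.verts) : B₁.verts = B₂.verts := by
  have hU := hB₁.isTwoEdgeConnected.union hB₂.isTwoEdgeConnected hw₁ hw₂
  have h₁ := hB₁.le_of_isTwoEdgeConnected hU ⟨Set.subset_union_left, Set.subset_union_left⟩
  have h₂ := hB₂.le_of_isTwoEdgeConnected hU ⟨Set.subset_union_right, Set.subset_union_right⟩
  exact (Set.subset_union_left.trans h₂.1).antisymm (Set.subset_union_right.trans h₁.1)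

lemma edgesIn_subset_nonIncidentEdges (hK : Disjoint K B.verts) :
    G.edgesIn H.edges K ⊆ nonIncidentEdges H B := by
  rintro e ⟨he, hs, ht⟩
  refine ⟨he, fun ⟨_, hc⟩ => ?_⟩
  rcases hc with ⟨h, -⟩ | ⟨h, -⟩
  exacts [Set.disjoint_left.1 hK hs h, Set.disjoint_left.1 hK ht h]

lemma notMem_of_crosses_componentOf {F : Set G.E} (h : G.Crosses (G.componentOf F x) e) :
    e ∉ F := fun he =>
  (xor_iff_not_iff _ _).1 h ⟨fun hs => Conn.trans hs (conn_of_mem he),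
    fun ht => Conn.trans ht (conn_of_mem he).symm⟩

lemma IsBlobIn.isCutEdge_of_crosses (hB : IsBlobIn (top G) B)
    (hG : ∀ u v : G.V, G.Conn Set.univ u v) (he : G.Crosses B.verts e) : (top G).IsCutEdge e := by
  by_contra hnc
  have htop : (top G).IsConnected := ⟨⟨G.src e, trivial⟩, fun u _ v _ => hG u v⟩
  obtain ⟨C, hC, hs, ht⟩ :=
    exists_isTwoEdgeConnected_of_conn_diff (htop.conn_diff hnc trivial trivial)
  obtain ⟨w, hwB, hwC⟩ : ∃ w ∈ B.verts, w ∈ C.verts := by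
    rcases he with ⟨h, -⟩ | ⟨h, -⟩
    exacts [⟨_, h, hs⟩, ⟨_, h, ht⟩]
  have hle := hB.le_of_isTwoEdgeConnected (hB.isTwoEdgeConnected.union hC hwB hwC)
    ⟨Set.subset_union_left, Set.subset_union_left⟩
  rcases he with ⟨-, h⟩ | ⟨-, h⟩
  exacts [h (hle.1 (Or.inr ht)), h (hle.1 (Or.inr hs))]

lemma IsBlobIn.disjoint_componentOf (hB : IsBlobIn (top G) B)
    (hG : ∀ u v : G.V, G.Conn Set.univ u v) (hx : x ∉ B.verts) :
    Disjoint (G.componentOf (nonIncidentEdges (top G) B) x) B.verts := by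
  refine Set.disjoint_left.2 fun v hv hvB => ?_
  obtain ⟨e, he, hc⟩ := (mem_componentOf.1 hv).symm.exists_crosses hvB hx
  exact he.2 ⟨hB.isCutEdge_of_crosses hG hc, hc⟩

/-- Two edges crossing this component would close a cycle through the blob. -/
lemma IsBlobIn.crosses_componentOf_subsingleton (hB : IsBlobIn (top G) B)
    (hG : ∀ u v : G.V, G.Conn Set.univ u v) (hx : x ∉ B.verts) :
    {e | G.Crosses (G.componentOf (nonIncidentEdges (top G) B) x) e}.Subsingleton := by
  set K := G.componentOf (nonIncidentEdges (top G) B) x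
  have hKB := Set.disjoint_left.1 (hB.disjoint_componentOf hG hx)
  have hcut : ∀ {e}, G.Crosses K e → IncidentCut (top G) B e := fun h =>
    not_not.1 fun h' => notMem_of_crosses_componentOf h ⟨trivial, h'⟩
  have hends : ∀ {e}, G.Crosses K e →
      (G.src e ∈ K ∧ G.tgt e ∈ B.verts) ∨ (G.src e ∈ B.verts ∧ G.tgt e ∈ K) := by
    intro e he
    have hxor : G.Crosses B.verts e := (hcut he).2
    have := @hKB (G.src e)
    have := @hKB (G.tgt e)
    unfold Crosses Xor at he hxor
    tauto
  intro e₁ h₁ e₂ h₂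
  by_contra hne
  have hFe₁ : nonIncidentEdges (top G) B ⊆ Set.univ \ {e₁} := fun e he =>
    ⟨trivial, fun h : e = e₁ => he.2 (h ▸ hcut h₁)⟩
  have hK : ∀ v ∈ K, G.Conn (Set.univ \ {e₁}) v x := fun v hv =>
    ((mem_componentOf.1 hv).mono hFe₁).symm
  have hBe₁ : B.edges ⊆ Set.univ \ {e₁} := by
    refine fun e he => ⟨trivial, fun h : e = e₁ => ?_⟩
    subst h
    rcases hends h₁ with ⟨hs, -⟩ | ⟨-, ht⟩
    exacts [hKB hs (B.src_mem e he), hKB ht (B.tgt_mem e he)]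
  obtain ⟨b, hb, hbx⟩ : ∃ b ∈ B.verts, G.Conn (Set.univ \ {e₁}) b x := by
    have h₂₁ : G.Conn (Set.univ \ {e₁}) (G.src e₂) (G.tgt e₂) :=
      conn_of_mem ⟨trivial, fun h : e₂ = e₁ => hne h.symm⟩
    rcases hends h₂ with ⟨hs, ht⟩ | ⟨hs, ht⟩
    exacts [⟨_, ht, h₂₁.symm.trans (hK _ hs)⟩, ⟨_, hs, h₂₁.trans (hK _ ht)⟩]
  have hBx : ∀ v ∈ B.verts, G.Conn (Set.univ \ {e₁}) v x := fun v hv =>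
    ((hB.isConnected.2 v hv b hb).mono hBe₁).trans hbx
  apply not_conn_of_isCutEdge (hcut h₁).1
  rcases hends h₁ with ⟨hs, ht⟩ | ⟨hs, ht⟩
  exacts [(hK _ hs).trans (hBx _ ht).symm, (hBx _ hs).trans (hK _ ht).symm]

/-- Disjoint blobs are impossible: `B₂` would lie in one component `K` left by deleting the cut
edges at `B₁`; `K` contains at most one of `p, q, r`, and the other two are joined outside `K`,
hence away from the cut edges at `B₂`. -/
lemma IsBlobIn.verts_eq_of_separates (hB₁ : IsBlobIn (top G) B₁) (hB₂ : IsBlobIn (top G) B₂)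
    (hG : ∀ u v : G.V, G.Conn Set.univ u v) {p q r : G.V}
    (h₁pq : ¬ G.Conn (nonIncidentEdges (top G) B₁) p q)
    (h₁pr : ¬ G.Conn (nonIncidentEdges (top G) B₁) p r)
    (h₁qr : ¬ G.Conn (nonIncidentEdges (top G) B₁) q r)
    (h₂pq : ¬ G.Conn (nonIncidentEdges (top G) B₂) p q)
    (h₂pr : ¬ G.Conn (nonIncidentEdges (top G) B₂) p r)
    (h₂qr : ¬ G.Conn (nonIncidentEdges (top G) B₂) q r) :
    B₁.verts = B₂.verts := by
  by_cases hsh : ∃ w ∈ B₁.verts, w ∈ B₂.verts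
  · obtain ⟨w, hw₁, hw₂⟩ := hsh
    exact hB₁.verts_eq_of_mem hB₂ hw₁ hw₂
  exfalso
  obtain ⟨v, hv⟩ := hB₂.isConnected.1
  have hv₁ : v ∉ B₁.verts := fun h => hsh ⟨v, h, hv⟩
  set K := G.componentOf (nonIncidentEdges (top G) B₁) v
  have hB₂K : B₂.verts ⊆ K := fun w hw =>
    (hB₂.isConnected.2 v hv w hw).mono fun e he =>
      edgesIn_subset_nonIncidentEdges (Set.disjoint_left.2 fun w hw₂ hw₁ => hsh ⟨w, hw₁, hw₂⟩)
        ⟨trivial, B₂.src_mem e he, B₂.tgt_mem e he⟩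
  have hout : ∀ s t, s ∉ K → t ∉ K → G.Conn (nonIncidentEdges (top G) B₂) s t := by
    intro s t hs ht
    refine ((hG s t).edgesIn_of_subsingleton (K := Kᶜ) ?_ hs ht).mono
      (edgesIn_subset_nonIncidentEdges (Set.disjoint_compl_left_iff_subset.2 hB₂K))
    simpa only [crosses_compl] using
      (hB₁.crosses_componentOf_subsingleton hG hv₁).anti fun e he => he.2
  by_cases hp : p ∈ K
  · refine h₂qr (hout q r (fun hq => h₁pq ?_) (fun hr => h₁pr ?_))
    exacts [(mem_componentOf.1 hp).symm.trans hq, (mem_componentOf.1 hp).symm.trans hr]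
  by_cases hq : q ∈ K
  · exact h₂pr (hout p r hp fun hr => h₁qr ((mem_componentOf.1 hq).symm.trans hr))
  exact h₂pq (hout p q hp hq)

end Blob

section Split

variable {X : Type} {H B : Subgraph G} {leaf : X → G.V} {K : Set G.V} {a p q z : X}

lemma Subgraph.IsTwoEdgeConnected.subset_or_subset_compl (hB : B.IsTwoEdgeConnected)
    (hK : {e ∈ B.edges | G.Crosses K e}.Subsingleton) : B.verts ⊆ K ∨ B.verts ⊆ Kᶜ := by
  have hside : ∀ u ∈ B.verts, ∀ w ∈ B.verts, u ∈ K → w ∈ K := by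
    intro u hu w hw huK
    by_cases hf : ∃ f ∈ B.edges, G.Crosses K f
    · obtain ⟨f, hfB, hfK⟩ := hf
      exact (hB.2 f u hu w hw).mem_of_not_crosses
        (fun e he hc => he.2 (hK ⟨he.1, hc⟩ ⟨hfB, hfK⟩)) huK
    · exact (hB.1.2 u hu w hw).mem_of_not_crosses (fun e he hc => hf ⟨e, he, hc⟩) huK
  obtain ⟨v, hv⟩ := hB.1.1
  by_cases hvK : v ∈ K
  · exact Or.inl fun w hw => hside v hv w hw hvK
  · exact Or.inr fun w hw hwK => hvK (hside w hw v hv hwK)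

/-- A blob has no cut edge, so it lies on one side of `K`; the pair on the other side is
joined away from it. -/
lemma not_bQuartetIn_of_split (haz : a ≠ z) (hpq : p ≠ q)
    (hK : {e ∈ H.edges | G.Crosses K e}.Subsingleton)
    (hin : G.Conn (G.edgesIn H.edges K) (leaf a) (leaf z))
    (hout : G.Conn (G.edgesIn H.edges Kᶜ) (leaf p) (leaf q)) :
    ¬ BQuartetIn H leaf a p q z := by
  rintro ⟨B, hB, hdet⟩
  rcases hB.isTwoEdgeConnected.subset_or_subset_compl
      (hK.anti fun e he => ⟨hB.1.2 he.1, he.2⟩) with hBK | hBK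
  · exact hdet p (by simp) q (by simp) hpq <| hout.mono <|
      edgesIn_subset_nonIncidentEdges (Set.disjoint_compl_left_iff_subset.2 hBK)
  · exact hdet a (by simp) z (by simp) haz <| hin.mono <|
      edgesIn_subset_nonIncidentEdges (Set.subset_compl_iff_disjoint_left.1 hBK)

lemma not_cutSep_of_split (hK : {e ∈ H.edges | G.Crosses K e}.Subsingleton)
    (hin : G.Conn (G.edgesIn H.edges K) (leaf a) (leaf z))
    (hout : G.Conn (G.edgesIn H.edges Kᶜ) (leaf p) (leaf q))
    (ha : leaf a ∈ K) (hp : leaf p ∉ K) : ¬ CutSep H leaf a p q z := by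
  rintro ⟨f, hf, hap, hqz, haq⟩
  by_cases hfK : G.Crosses K f
  · exact hp (hap.mem_of_not_crosses (fun e he hc => he.2 (hK ⟨he.1, hc⟩ ⟨hf.1, hfK⟩)) ha)
  have hf' : (G.src f ∈ K ∧ G.tgt f ∈ K) ∨ (G.src f ∉ K ∧ G.tgt f ∉ K) := by
    unfold Crosses Xor at hfK
    tauto
  rcases hf' with ⟨hs, -⟩ | ⟨hs, -⟩
  · have hfout : G.edgesIn H.edges Kᶜ ⊆ H.edges \ {f} := fun e he =>
      ⟨he.1, fun h : e = f => he.2.1 (h ▸ hs)⟩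
    exact haq (hap.trans (hout.mono hfout))
  · have hfin : G.edgesIn H.edges K ⊆ H.edges \ {f} := fun e he =>
      ⟨he.1, fun h : e = f => hs (h ▸ he.2.1)⟩
    exact haq ((hin.mono hfin).trans hqz.symm)

end Split

section Determines

variable {X : Type} {H B : Subgraph G} {leaf : X → G.V} {S T : Set X} {a : X}

lemma DeterminesIn.mono (h : DeterminesIn H B leaf S) (hTS : T ⊆ S) :
    DeterminesIn H B leaf T :=
  fun s hs t ht => h s (hTS hs) t (hTS ht)

lemma DeterminesIn.insert (h : DeterminesIn H B leaf S)
    (ha : ∀ t ∈ S, a ≠ t → ¬ G.Conn (nonIncidentEdges H B) (leaf a) (leaf t)) :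
    DeterminesIn H B leaf (insert a S) := by
  rintro s (rfl | hs) t (rfl | ht) hst
  · exact absurd rfl hst
  · exact ha t ht hst
  · exact fun hc => ha s hs (Ne.symm hst) hc.symm
  · exact h s hs t ht hst

lemma DeterminesIn.of_verts_eq {B' : Subgraph G} (h : DeterminesIn H B leaf S)
    (hB : B.verts = B'.verts) : DeterminesIn H B' leaf S := by
  simpa only [DeterminesIn, IncidentCut, hB] using h

end Determines

end MDigraph

namespace PhyloNetwork

variable {X : Type} (N : PhyloNetwork X) {t : X} {u w : N.V} {p : N.E}

lemma src_ne_leaf (e : N.E) (t : X) : N.src e ≠ N.leaf t := fun he =>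
  (Finite.card_eq_zero_iff.1 (N.leaf_out t)).false ⟨e, he⟩

lemma existsUnique_tgt_eq_leaf (t : X) : ∃! e, N.tgt e = N.leaf t := by
  obtain ⟨hsub, ⟨e, he⟩⟩ := Nat.card_eq_one_iff_unique.1 (N.leaf_in t)
  exact ⟨e, he, fun e' he' => congrArg Subtype.val (hsub.elim ⟨e', he'⟩ ⟨e, he⟩)⟩

lemma exists_tgt_eq_of_ne_root (hu : u ≠ N.root) : ∃ e, N.tgt e = u := by
  by_cases hleaf : ∃ t, u = N.leaf t
  · obtain ⟨t, rfl⟩ := hleaf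
    exact (N.existsUnique_tgt_eq_leaf t).exists
  · have hpos : 0 < N.inDeg u := by
      rcases N.internal u hu fun t h => hleaf ⟨t, h⟩ with ⟨h, -⟩ | ⟨h, -⟩ <;> omega
    obtain ⟨⟨e, he⟩⟩ := (Nat.card_pos_iff.1 hpos).1
    exact ⟨e, he⟩

lemma wellFounded_dStep : WellFounded (N.DStep Set.univ) := by
  have : IsTrans N.V (Relation.TransGen (N.DStep Set.univ)) := ⟨fun _ _ _ => .trans⟩
  have : Std.Irrefl (Relation.TransGen (N.DStep Set.univ)) := ⟨N.acyclic⟩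
  exact Subrelation.wf Relation.TransGen.single (Finite.wellFounded_of_trans_of_irrefl _)

lemma root_above (v : N.V) : N.Above N.root v := by
  induction v using N.wellFounded_dStep.induction with
  | _ v ih =>
    by_cases hv : v = N.root
    · exact hv ▸ Relation.ReflTransGen.refl
    obtain ⟨e, he⟩ := N.exists_tgt_eq_of_ne_root hv
    exact (ih _ ⟨e, trivial, rfl, he⟩).tail ⟨e, trivial, rfl, he⟩

lemma dConn_inducedSub {Y : Set X} (ht : t ∈ Y) (h : N.Above u (N.leaf t)) :
    N.DConn (N.inducedSub Y).edges u (N.leaf t) := by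
  induction h using Relation.ReflTransGen.head_induction_on with
  | refl => exact .refl
  | head hstep hrest ih =>
    obtain ⟨e, -, hs, he⟩ := hstep
    exact .head ⟨e, ⟨t, ht, he ▸ hrest⟩, hs, he⟩ ih

lemma conn_inducedSub {Y : Set X} {s : X} (hs : s ∈ Y) (ht : t ∈ Y) :
    N.Conn (N.inducedSub Y).edges (N.leaf s) (N.leaf t) :=
  (N.dConn_inducedSub hs (N.root_above _)).toConn.symm.trans
    (N.dConn_inducedSub ht (N.root_above _)).toConn

lemma eq_leaf_of_conn_diff (hp : N.tgt p = N.leaf t)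
    (h : N.Conn (Set.univ \ {p}) (N.leaf t) w) : w = N.leaf t := by
  rcases h.cases_head with rfl | ⟨c, ⟨e, he, ⟨hs, -⟩ | ⟨-, ht⟩⟩, -⟩
  · rfl
  · exact absurd hs (N.src_ne_leaf e t)
  · exact absurd ((N.existsUnique_tgt_eq_leaf t).unique ht hp) he.2

lemma conn_diff_of_ne_leaf (hp : N.tgt p = N.leaf t) (hu : u ≠ N.leaf t) (hw : w ≠ N.leaf t) :
    N.Conn (Set.univ \ {p}) u w := by
  rcases (N.conn u w).decomp p with h | ⟨-, h⟩ | ⟨h, -⟩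
  · exact h
  · exact absurd (N.eq_leaf_of_conn_diff hp (hp ▸ h)) hw
  · exact absurd (N.eq_leaf_of_conn_diff hp (hp ▸ h.symm)) hu

/-- A leaf in a blob would be the whole blob, whose only incident cut edge is the leaf's
pendant edge, and deleting that edge separates no two other leaves. -/
lemma leaf_notMem_blob {B : Subgraph N.toMDigraph} (hB : IsBlobIn (top N.toMDigraph) B)
    {s s' : X} (hs : s ≠ t) (hs' : s' ≠ t)
    (hsep : ¬ N.Conn (nonIncidentEdges (top N.toMDigraph) B) (N.leaf s) (N.leaf s')) :
    N.leaf t ∉ B.verts := by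
  intro ht
  obtain ⟨p, hp, hpu⟩ := N.existsUnique_tgt_eq_leaf t
  have hBt : ∀ v ∈ B.verts, v = N.leaf t := fun v hv =>
    N.eq_leaf_of_conn_diff hp ((hB.isTwoEdgeConnected.2 p _ ht v hv).mono
      (Set.sdiff_subset_sdiff_left (Set.subset_univ _)))
  have hcut : ∀ e, IncidentCut (top N.toMDigraph) B e → e = p := by
    rintro e ⟨-, ⟨hs, -⟩ | ⟨ht, -⟩⟩
    · exact absurd (hBt _ hs) (N.src_ne_leaf e t)
    · exact hpu e (hBt _ ht)
  refine hsep ((N.conn_diff_of_ne_leaf hp (N.leaf_inj.ne hs) (N.leaf_inj.ne hs')).mono ?_)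
  exact fun e he => ⟨trivial, fun hc => he.2 (hcut e hc)⟩

/-- The cut edge joining the side of `a` to the blob splits the induced network on
`{a, p, q, z}` into `az | pq`. -/
lemma not_ruleHyp_of_conn {B : Subgraph N.toMDigraph} (hB : IsBlobIn (top N.toMDigraph) B)
    {a p q z : X} (haz : a ≠ z) (hpq : p ≠ q) (ha : N.leaf a ∉ B.verts)
    (hap : ¬ N.Conn (nonIncidentEdges (top N.toMDigraph) B) (N.leaf a) (N.leaf p))
    (haq : ¬ N.Conn (nonIncidentEdges (top N.toMDigraph) B) (N.leaf a) (N.leaf q))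
    (hz : N.Conn (nonIncidentEdges (top N.toMDigraph) B) (N.leaf a) (N.leaf z)) :
    ¬ RuleHyp N a p q z := by
  set K := N.componentOf (nonIncidentEdges (top N.toMDigraph) B) (N.leaf a)
  set H := N.inducedSub {a, p, q, z}
  have hK : {e ∈ H.edges | N.Crosses K e}.Subsingleton :=
    (hB.crosses_componentOf_subsingleton N.conn ha).anti fun e he => he.2
  have hKc : {e ∈ H.edges | N.Crosses Kᶜ e}.Subsingleton := by
    simpa only [crosses_compl] using hK
  have hin : N.Conn (N.edgesIn H.edges K) (N.leaf a) (N.leaf z) :=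
    (N.conn_inducedSub (by simp) (by simp)).edgesIn_of_subsingleton hK Conn.rfl hz
  have hout : N.Conn (N.edgesIn H.edges Kᶜ) (N.leaf p) (N.leaf q) :=
    (N.conn_inducedSub (by simp) (by simp)).edgesIn_of_subsingleton hKc hap haq
  rintro (⟨-, h | h⟩ | h)
  · exact not_cutSep_of_split hK hin hout Conn.rfl hap h
  · exact not_cutSep_of_split hK hin hout.symm Conn.rfl haq h
  · exact not_bQuartetIn_of_split haz hpq hK hin hout h

end PhyloNetwork

theorem stmt_3_general {X : Type} (N : PhyloNetwork X)
    (a b c d e : X) (hpair : List.Pairwise (· ≠ ·) [a, b, c, d, e])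
    (h1 : BQuartetIn (top N.toMDigraph) N.leaf a b c d)
    (h2 : BQuartetIn (top N.toMDigraph) N.leaf b c d e)
    (h3 : RuleHyp N a b c e ∨ RuleHyp N a b d e ∨ RuleHyp N a c d e) :
    BQuartetIn (top N.toMDigraph) N.leaf a b c e ∧
    BQuartetIn (top N.toMDigraph) N.leaf a b d e ∧
    BQuartetIn (top N.toMDigraph) N.leaf a c d e := by
  simp only [List.pairwise_cons, List.mem_cons, List.not_mem_nil, forall_eq_or_imp, forall_eq,
    or_false, List.Pairwise.nil, and_true, IsEmpty.forall_iff] at hpair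
  obtain ⟨⟨hab, hac, had, hae⟩, ⟨hbc, hbd, hbe⟩, ⟨hcd, hce⟩, hde⟩ := hpair
  obtain ⟨B, hB, hsep⟩ := h1
  obtain ⟨B₂, hB₂, hsep₂⟩ := h2
  have hV : B₂.verts = B.verts := hB₂.verts_eq_of_separates hB N.conn
    (hsep₂ b (by simp) c (by simp) hbc) (hsep₂ b (by simp) d (by simp) hbd)
    (hsep₂ c (by simp) d (by simp) hcd) (hsep b (by simp) c (by simp) hbc)
    (hsep b (by simp) d (by simp) hbd) (hsep c (by simp) d (by simp) hcd)
  have hsepa : ∀ t ∈ ({b, c, d} : Set X),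
      ¬ N.Conn (nonIncidentEdges (top N.toMDigraph) B) (N.leaf a) (N.leaf t) := by
    rintro t (rfl | rfl | rfl)
    exacts [hsep a (by simp) _ (by simp) hab, hsep a (by simp) _ (by simp) hac,
      hsep a (by simp) _ (by simp) had]
  have hae' : ¬ N.Conn (nonIncidentEdges (top N.toMDigraph) B) (N.leaf a) (N.leaf e) := by
    intro hz
    have ha := N.leaf_notMem_blob hB hab.symm hac.symm (hsep b (by simp) c (by simp) hbc)
    rcases h3 with h | h | h
    exacts [N.not_ruleHyp_of_conn hB hae hbc ha (hsepa b (by simp)) (hsepa c (by simp)) hz h,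
      N.not_ruleHyp_of_conn hB hae hbd ha (hsepa b (by simp)) (hsepa d (by simp)) hz h,
      N.not_ruleHyp_of_conn hB hae hcd ha (hsepa c (by simp)) (hsepa d (by simp)) hz h]
  have hall : DeterminesIn (top N.toMDigraph) B N.leaf (insert a {b, c, d, e}) := by
    refine (hsep₂.of_verts_eq hV).insert fun t ht _ => ?_
    rcases ht with rfl | rfl | rfl | rfl
    exacts [hsepa _ (by simp), hsepa _ (by simp), hsepa _ (by simp), hae']
  refine ⟨⟨B, hB, hall.mono ?_⟩, ⟨B, hB, hall.mono ?_⟩, ⟨B, hB, hall.mono ?_⟩⟩ <;>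
    simp [Set.insert_subset_iff]

/-- B-quartet Inference Rule.
Let `N⁺` be a rooted binary phylogenetic network on `n ≥ 5` taxa and suppose
`{a,b,c,d}` and `{b,c,d,e}` are B-quartets on `N⁺`.  If on its induced
4-taxon network any one of `{a,b,c,e}`, `{a,b,d,e}`, `{a,c,d,e}` is either
(a) a T-quartet whose associated resolved quartet separates `a` and `e`, or
(b) a B-quartet, then all three of `{a,b,c,e}`, `{a,b,d,e}`, `{a,c,d,e}` are
B-quartets on `N⁺`. -/
theorem stmt_3 {X : Type} (N : PhyloNetwork X) (hn : 5 ≤ Nat.card X)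
    (a b c d e : X) (hpair : List.Pairwise (· ≠ ·) [a, b, c, d, e])
    (h1 : BQuartetIn (top N.toMDigraph) N.leaf a b c d)
    (h2 : BQuartetIn (top N.toMDigraph) N.leaf b c d e)
    (h3 : RuleHyp N a b c e ∨ RuleHyp N a b d e ∨ RuleHyp N a c d e) :
    BQuartetIn (top N.toMDigraph) N.leaf a b c e ∧
    BQuartetIn (top N.toMDigraph) N.leaf a b d e ∧
    BQuartetIn (top N.toMDigraph) N.leaf a c d e :=
  stmt_3_general N a b c d e hpair h1 h2 h3
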